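/- Let n ≥ 1 be an integer, let f : [-1/2,1/2] → ℝ be convex, and set f_s(x) = (f(x)+f(−x))/2 − f(0). For integers j ≥ 1 with 2^{j-1} ≤ n define D_j = 2^{-(j-1)} Σ_{k=1}^{2^{j-1}} f_s(k/(2n)), and for j ≥ 2 define T_j = D_j − D_{j-1}. Then for every integer j with j ≥ 2 and 2^j ≤ n one has 2 T_j ≤ T_{j+1}. -/

import Mathlib

/-!
Put `m = 2^(j-2)` and cut `f_s(k/(2n))`, `1 ≤ k ≤ 4m`, into four consecutive blocks of `m` terms
with sums `A, B, C, E`. Then `2^j D_(j-1) = 4A`, `2^j D_j = 2(A+B)`, `2^j D_(j+1) = A+B+C+E`, and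
the claim becomes `5B ≤ 3A + C + E`. Since `f_s` is convex, each block is at most the average of
its two neighbours: `2B ≤ A + C` and `2C ≤ B + E`, and these two inequalities give the claim.
-/

open Finset

theorem Finset.sum_Icc_one_eq_sum_range {M : Type*} [AddCommMonoid M] (g : ℕ → M) (N : ℕ) :
    ∑ k ∈ Icc 1 N, g k = ∑ i ∈ range N, g (i + 1) := by
  rw [← Ico_add_one_right_eq_Icc, sum_Ico_eq_sum_range, Nat.add_sub_cancel]
  simp_rw [add_comm 1]

theorem Finset.sum_range_mul_eq_sum_blocks {M : Type*} [AddCommMonoid M] (h : ℕ → M) (m k : ℕ) :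
    ∑ i ∈ range (k * m), h i = ∑ l ∈ range k, ∑ i ∈ range m, h (l * m + i) := by
  induction k with
  | zero => simp
  | succ k ih => rw [add_mul, one_mul, sum_range_add, ih, sum_range_succ]

theorem ConvexOn.two_mul_map_add_div_two_le {s : Set ℝ} {φ : ℝ → ℝ} (hφ : ConvexOn ℝ s φ)
    {x y : ℝ} (hx : x ∈ s) (hy : y ∈ s) : 2 * φ ((x + y) / 2) ≤ φ x + φ y := by
  have := hφ.2 hx hy (by norm_num : (0 : ℝ) ≤ 1 / 2) (by norm_num : (0 : ℝ) ≤ 1 / 2) (by norm_num)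
  rw [smul_eq_mul, smul_eq_mul, smul_eq_mul, smul_eq_mul, ← mul_add, mul_comm,
    ← div_eq_mul_one_div] at this
  linarith

theorem ConvexOn.two_mul_map_natCast_div_le {s : Set ℝ} {φ : ℝ → ℝ} (hφ : ConvexOn ℝ s φ)
    (N : ℝ) {a b c : ℕ} (habc : a + c = 2 * b) (ha : (a : ℝ) / N ∈ s) (hc : (c : ℝ) / N ∈ s) :
    2 * φ (b / N) ≤ φ (a / N) + φ (c / N) := by
  have hmid : ((a : ℝ) / N + c / N) / 2 = b / N := by
    rw [← add_div, ← Nat.cast_add, habc]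
    push_cast
    ring
  simpa only [hmid] using hφ.two_mul_map_add_div_two_le ha hc

theorem ConvexOn.symmetrize {a : ℝ} {f : ℝ → ℝ} (hf : ConvexOn ℝ (Set.Icc (-a) a) f) :
    ConvexOn ℝ (Set.Icc (-a) a) (fun x => (f x + f (-x)) / 2 - f 0) := by
  have hneg : ConvexOn ℝ (Set.Icc (-a) a) (fun x => f (-x)) := by
    have hpre : (-id : ℝ → ℝ) ⁻¹' Set.Icc (-a) a = Set.Icc (-a) a := by
      ext x
      simp [neg_le, and_comm]
    simpa [hpre, Function.comp_def] using hf.comp_linearMap (-LinearMap.id)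
  refine (((hf.add hneg).smul (c := (1 / 2 : ℝ)) (by norm_num)).add_const (-f 0)).congr
    fun x _ => ?_
  simp only [Pi.add_apply, smul_eq_mul]
  ring

theorem natCast_div_two_mul_mem_Icc {k n : ℕ} (hk : k ≤ n) :
    (k : ℝ) / (2 * n) ∈ Set.Icc (-(1 / 2) : ℝ) (1 / 2) := by
  have hk' : (k : ℝ) ≤ n := by exact_mod_cast hk
  refine ⟨le_trans (by norm_num) (by positivity : (0 : ℝ) ≤ k / (2 * n)), ?_⟩
  rcases (Nat.zero_le n).eq_or_lt with rfl | hn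
  · simp
  · rw [div_le_iff₀ (by positivity)]
    linarith

noncomputable def prefixMean (h : ℕ → ℝ) (N : ℕ) : ℝ := (N : ℝ)⁻¹ * ∑ i ∈ range N, h i

theorem sum_range_four_mul_le {h : ℕ → ℝ} {m : ℕ}
    (hconv : ∀ i < 2 * m, 2 * h (i + m) ≤ h i + h (i + 2 * m)) :
    6 * ∑ i ∈ range (2 * m), h i ≤ ∑ i ∈ range (4 * m), h i + 8 * ∑ i ∈ range m, h i := by
  set block : ℕ → ℝ := fun l => ∑ i ∈ range m, h (l * m + i) with hblock
  have hblock_conv : ∀ l < 2, 2 * block (l + 1) ≤ block l + block (l + 2) := by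
    intro l hl
    rw [hblock, mul_sum, ← sum_add_distrib]
    refine sum_le_sum fun i hi => ?_
    rw [show (l + 1) * m + i = l * m + i + m by ring,
      show (l + 2) * m + i = l * m + i + 2 * m by ring]
    exact hconv (l * m + i) (by nlinarith [mem_range.mp hi])
  have hsum : ∀ k, ∑ i ∈ range (k * m), h i = ∑ l ∈ range k, block l :=
    sum_range_mul_eq_sum_blocks h m
  have h1 := hblock_conv 0 two_pos
  have h2 := hblock_conv 1 one_lt_two
  have hsum_one := one_mul m ▸ hsum 1
  rw [hsum 2, hsum 4, hsum_one]
  simp only [sum_range_succ, sum_range_zero] at h1 h2 ⊢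
  linarith

theorem prefixMean_doubling {h : ℕ → ℝ} {m : ℕ}
    (hconv : ∀ i < 2 * m, 2 * h (i + m) ≤ h i + h (i + 2 * m)) :
    2 * (prefixMean h (2 * m) - prefixMean h m) ≤
      prefixMean h (4 * m) - prefixMean h (2 * m) := by
  rcases (Nat.zero_le m).eq_or_lt with rfl | hm
  · simp [prefixMean]
  have hm' : (0 : ℝ) < m := by exact_mod_cast hm
  have := sum_range_four_mul_le hconv
  simp only [prefixMean]
  push_cast
  field_simp
  linarith

theorem regression_bias_difference_doubling
    (n : ℕ)
    (f : ℝ → ℝ) (hf : ConvexOn ℝ (Set.Icc (-(1:ℝ)/2) (1/2)) f)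
    (fs : ℝ → ℝ) (hfs : ∀ x : ℝ, fs x = (f x + f (-x))/2 - f 0)
    (D T : ℕ → ℝ)
    (hD : ∀ j : ℕ, 1 ≤ j → 2 ^ (j - 1) ≤ n →
      D j = (2:ℝ) ^ (1 - (j:ℤ)) * ∑ k ∈ Finset.Icc (1:ℕ) (2 ^ (j - 1)), fs ((k:ℝ)/(2*(n:ℝ))))
    (hT : ∀ j : ℕ, 2 ≤ j → T j = D j - D (j - 1)) :
    ∀ j : ℕ, 2 ≤ j → 2 ^ j ≤ n → 2 * T j ≤ T (j + 1) := by
  intro j hj hjn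
  obtain ⟨k, rfl⟩ : ∃ k, j = k + 2 := ⟨j - 2, by omega⟩
  set g : ℕ → ℝ := fun i => fs (((i + 1 : ℕ) : ℝ) / (2 * n))
  have hD' : ∀ l, 2 ^ l ≤ n → D (l + 1) = prefixMean g (2 ^ l) := by
    intro l hl
    rw [hD (l + 1) (by omega) hl, Nat.add_sub_cancel, sum_Icc_one_eq_sum_range, prefixMean,
      show (1 : ℤ) - (l + 1 : ℕ) = -(l : ℤ) by push_cast; ring, zpow_neg, zpow_natCast,
      Nat.cast_pow, Nat.cast_ofNat]
  have h4m : 4 * 2 ^ k ≤ n := by rw [pow_add] at hjn; linarith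
  have hfs_conv : ConvexOn ℝ (Set.Icc (-(1 / 2)) (1 / 2)) fs :=
    (neg_div 2 (1 : ℝ) ▸ hf).symmetrize.congr fun x _ => (hfs x).symm
  have hconv : ∀ i < 2 * 2 ^ k, 2 * g (i + 2 ^ k) ≤ g i + g (i + 2 * 2 ^ k) := fun i hi =>
    hfs_conv.two_mul_map_natCast_div_le _ (by omega) (natCast_div_two_mul_mem_Icc (by omega))
      (natCast_div_two_mul_mem_Icc (by omega))
  rw [hT _ hj, hT _ (by omega), Nat.add_sub_cancel, show k + 2 - 1 = k + 1 from rfl,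
    hD' k (by omega), hD' (k + 1) (by omega), hD' (k + 2) hjn, pow_succ', pow_add]
  simpa [mul_comm] using prefixMean_doubling hconv
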